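/- Let δ, c, ε be constants with 0 < c < δ < 1, 0 < ε < 1, and (1−ε)/ln(1/δ) > (1+ε)/ln(1/c). For each n ≥ 2 let (K_n, λ) be a random simple temporal graph on n vertices, and let k_0(n) = 2 ln n / ln(1/δ). Then the probability that there exists a vertex subset Q of size at least ⌊(1−ε)·k_0(n)⌋ with max{λ_e : e has both endpoints in Q} − min{λ_e : e has both endpoints in Q} ≤ c tends to 0 as n → ∞. (In particular, with high probability every δ-temporal clique Q of size at least ⌊(1−ε)·k_0(n)⌋ has its labels spanning an interval of length greater than c.) -/

import Mathlib

open MeasureTheory ProbabilityTheory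

/-- The edge set of the complete graph `K_n` on vertex set `Fin n`:
unordered pairs of distinct vertices. -/
def EdgeKn (n : ℕ) : Type := {e : Sym2 (Fin n) // ¬ e.IsDiag}

/-- `Q` is a `δ`-temporal clique for the labeling `lam` if any two edges with
both endpoints in `Q` carry labels at most `δ` apart. -/
def IsTemporalClique {n : ℕ} (lam : EdgeKn n → ℝ) (δ : ℝ) (Q : Finset (Fin n)) : Prop :=
  ∀ e e' : EdgeKn n, (∀ v ∈ e.1, v ∈ Q) → (∀ v ∈ e'.1, v ∈ Q) →
    |lam e - lam e'| ≤ δ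

open scoped Classical in
/-- The number of `k`-element vertex subsets of `Fin n` that are `δ`-temporal cliques. -/
noncomputable def cliqueCount {n : ℕ} (lam : EdgeKn n → ℝ) (δ : ℝ) (k : ℕ) : ℕ :=
  ((Finset.univ.powersetCard k).filter (fun Q => IsTemporalClique lam δ Q)).card

/-!
Union bound over vertex sets and discretised label windows. If the labels inside `Q` span at
most `c`, they all lie in one of the `⌊1/w⌋ + 1` windows `[t w, t w + c + w]`. For a fixed
`k`-set and window, independence bounds the probability by `(c + w)^(k choose 2)`, so the
probability in question is at most `(⌊1/w⌋ + 1) · n^k · (c + w)^(k choose 2)`. The gap condition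
leaves room for `c + w = e^{-γ}` with `γ α > 2`, where `k = ⌊α ln n⌋`, `α = 2(1 - ε)/ln(1/δ)`;
since `ln n < (k + 1)/α`, the bound is at most `exp (k(k+1)/α - γ k(k-1)/2)`, which is
quadratic in `k` with negative leading coefficient.
-/

open Finset Filter Real
open scoped Topology

instance (n : ℕ) : Fintype (EdgeKn n) := inferInstanceAs (Fintype {e : Sym2 (Fin n) // ¬ e.IsDiag})

open scoped Classical in
noncomputable def edgesIn {n : ℕ} (Q : Finset (Fin n)) : Finset (EdgeKn n) :=
  univ.filter fun e => ∀ v ∈ e.1, v ∈ Q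

lemma mem_edgesIn {n : ℕ} {Q : Finset (Fin n)} {e : EdgeKn n} :
    e ∈ edgesIn Q ↔ ∀ v ∈ e.1, v ∈ Q := by
  classical
  simp [edgesIn]

lemma card_edgesIn {n : ℕ} (Q : Finset (Fin n)) : #(edgesIn Q) = (#Q).choose 2 := by
  classical
  let toSym2 : EdgeKn n ↪ Sym2 (Fin n) := Function.Embedding.subtype _
  rw [← Sym2.card_image_offDiag, ← card_map toSym2]
  congr 1
  ext z
  simp only [Finset.mem_map, mem_image, mem_offDiag]
  constructor
  · rintro ⟨⟨z, hz⟩, hzQ, rfl⟩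
    induction z using Sym2.ind with
    | _ a b =>
      have hQ := mem_edgesIn.mp hzQ
      exact ⟨(a, b), ⟨hQ a (by simp), hQ b (by simp), by simpa using hz⟩, rfl⟩
  · rintro ⟨⟨a, b⟩, ⟨ha, hb, hab⟩, rfl⟩
    refine ⟨⟨s(a, b), by simpa using hab⟩, mem_edgesIn.mpr ?_, rfl⟩
    intro v hv
    rcases Sym2.mem_iff.mp hv with rfl | rfl <;> assumption

lemma IsTemporalClique.mono {n : ℕ} {x : EdgeKn n → ℝ} {δ : ℝ} {Q Q' : Finset (Fin n)}
    (h : IsTemporalClique x δ Q) (hQ' : Q' ⊆ Q) : IsTemporalClique x δ Q' :=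
  fun e e' he he' => h e e' (fun v hv => hQ' (he v hv)) (fun v hv => hQ' (he' v hv))

lemma Icc_subset_window {μ c w : ℝ} (hμ : 0 ≤ μ) (hw : 0 < w) :
    Set.Icc μ (μ + c) ⊆ Set.Icc (⌊μ / w⌋₊ * w) (⌊μ / w⌋₊ * w + (c + w)) := by
  have h₁ : ⌊μ / w⌋₊ * w ≤ μ := (le_div_iff₀ hw).mp (Nat.floor_le (div_nonneg hμ hw.le))
  have h₂ : μ < (⌊μ / w⌋₊ + 1) * w := (div_lt_iff₀ hw).mp (Nat.lt_floor_add_one _)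
  exact Set.Icc_subset_Icc h₁ (by linarith)

lemma exists_window {ι : Type*} {S : Finset ι} (hS : S.Nonempty) {x : ι → ℝ} {c w : ℝ}
    (hw : 0 < w) (hx : ∀ i ∈ S, x i ∈ Set.Icc 0 1) (hc : ∀ i ∈ S, ∀ j ∈ S, |x i - x j| ≤ c) :
    ∃ t ≤ ⌊1 / w⌋₊, ∀ i ∈ S, x i ∈ Set.Icc (t * w) (t * w + (c + w)) := by
  obtain ⟨i₀, hi₀, hmin⟩ := S.exists_mem_eq_inf' hS x
  refine ⟨⌊x i₀ / w⌋₊, Nat.floor_le_floor (by gcongr; exact (hx i₀ hi₀).2), fun i hi => ?_⟩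
  refine Icc_subset_window (hx i₀ hi₀).1 hw ⟨?_, ?_⟩
  · exact hmin ▸ S.inf'_le x hi
  · linarith [(abs_le.mp (hc i hi i₀ hi₀)).2]

section UniformLabels

variable {Ω ι : Type*} [MeasurableSpace Ω] {P : Measure Ω} {X : ι → Ω → ℝ}

lemma ae_forall_mem_Icc_of_map_eq [Countable ι] (hmeas : ∀ i, Measurable (X i))
    (hunif : ∀ i, P.map (X i) = volume.restrict (Set.Icc 0 1)) :
    ∀ᵐ ω ∂P, ∀ i, X i ω ∈ Set.Icc (0 : ℝ) 1 :=
  ae_all_iff.mpr fun i => (ae_map_iff (hmeas i).aemeasurable measurableSet_Icc).mp <|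
    hunif i ▸ ae_restrict_mem measurableSet_Icc

lemma measure_biInter_preimage_Icc_le (hmeas : ∀ i, Measurable (X i)) (hindep : iIndepFun X P)
    (hunif : ∀ i, P.map (X i) = volume.restrict (Set.Icc 0 1)) (S : Finset ι) (a ℓ : ℝ) :
    P (⋂ i ∈ S, X i ⁻¹' Set.Icc a (a + ℓ)) ≤ ENNReal.ofReal ℓ ^ #S := by
  rw [hindep.measure_inter_preimage_eq_mul S fun _ _ => measurableSet_Icc, ← prod_const]
  refine prod_le_prod' fun i _ => ?_
  rw [← Measure.map_apply (hmeas i) measurableSet_Icc, hunif i]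
  calc _ ≤ volume (Set.Icc a (a + ℓ)) := Measure.restrict_apply_le _ _
    _ = ENNReal.ofReal ℓ := by simp [Real.volume_Icc]

end UniformLabels

theorem measure_exists_temporalClique_le {Ω : Type*} [MeasurableSpace Ω] {P : Measure Ω}
    {n : ℕ} {lam : EdgeKn n → Ω → ℝ} (hmeas : ∀ e, Measurable (lam e))
    (hindep : iIndepFun lam P) (hunif : ∀ e, P.map (lam e) = volume.restrict (Set.Icc 0 1))
    {c w : ℝ} (hw : 0 < w) {k : ℕ} (hk : 2 ≤ k) :
    P {ω | ∃ Q : Finset (Fin n), k ≤ #Q ∧ IsTemporalClique (fun e => lam e ω) c Q}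
      ≤ n.choose k * (⌊1 / w⌋₊ + 1) * ENNReal.ofReal (c + w) ^ k.choose 2 := by
  classical
  set window : ℕ → Set ℝ := fun t => Set.Icc (t * w) (t * w + (c + w))
  have hcover : {ω | ∃ Q : Finset (Fin n), k ≤ #Q ∧ IsTemporalClique (fun e => lam e ω) c Q}
      ≤ᵐ[P] ⋃ Q ∈ powersetCard k univ, ⋃ t ∈ range (⌊1 / w⌋₊ + 1),
        ⋂ e ∈ edgesIn Q, lam e ⁻¹' window t := by
    filter_upwards [ae_forall_mem_Icc_of_map_eq hmeas hunif] with ω h01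
    rintro ⟨Q, hkQ, hQ⟩
    obtain ⟨Q', hQ'Q, rfl⟩ := exists_subset_card_eq hkQ
    have hne : (edgesIn Q').Nonempty := card_pos.mp (card_edgesIn Q' ▸ Nat.choose_pos hk)
    obtain ⟨t, ht, hwin⟩ := exists_window hne hw (fun e _ => h01 e)
      fun e he e' he' => hQ.mono hQ'Q e e' (mem_edgesIn.mp he) (mem_edgesIn.mp he')
    exact Set.mem_iUnion₂.mpr ⟨Q', mem_powersetCard_univ.mpr rfl,
      Set.mem_iUnion₂.mpr ⟨t, mem_range.mpr (Nat.lt_succ_of_le ht), Set.mem_iInter₂.mpr hwin⟩⟩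
  calc _ ≤ P (⋃ Q ∈ powersetCard k univ, ⋃ t ∈ range (⌊1 / w⌋₊ + 1),
        ⋂ e ∈ edgesIn Q, lam e ⁻¹' window t) := measure_mono_ae hcover
    _ ≤ ∑ Q ∈ powersetCard k univ, ∑ t ∈ range (⌊1 / w⌋₊ + 1),
        P (⋂ e ∈ edgesIn Q, lam e ⁻¹' window t) :=
      (measure_biUnion_finset_le _ _).trans (sum_le_sum fun _ _ => measure_biUnion_finset_le _ _)
    _ ≤ ∑ Q ∈ powersetCard k univ, ∑ t ∈ range (⌊1 / w⌋₊ + 1),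
        ENNReal.ofReal (c + w) ^ k.choose 2 := by
      gcongr with Q hQ t
      rw [← mem_powersetCard_univ.mp hQ, ← card_edgesIn]
      exact measure_biInter_preimage_Icc_le hmeas hindep hunif _ _ _
    _ = _ := by simp [mul_assoc]

lemma tendsto_quadratic_sub_atBot {α γ : ℝ} (hα : 0 < α) (hγα : 2 < γ * α) :
    Tendsto (fun x : ℝ => x * (x + 1) / α - γ * (x * (x - 1) / 2)) atTop atBot := by
  have hlead : 1 / α - γ / 2 < 0 := by
    rw [sub_neg, div_lt_div_iff₀ hα two_pos]; linarith
  have hfactor : Tendsto (fun x : ℝ => x * (1 / α - γ / 2) + (1 / α + γ / 2)) atTop atBot :=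
    tendsto_atBot_add_const_right _ _ (tendsto_id.atTop_mul_const_of_neg hlead)
  convert tendsto_id.atTop_mul_atBot₀ hfactor using 1
  ext x
  simp only [id]
  ring

lemma pow_mul_exp_neg_mul_choose_two_le {α γ x : ℝ} (hα : 0 < α) (hx : 0 < x) {k : ℕ}
    (hk : α * log x < k + 1) :
    x ^ k * exp (-γ) ^ k.choose 2 ≤ exp (k * (k + 1) / α - γ * (k * (k - 1) / 2)) := by
  have hlog : k * log x ≤ k * (k + 1) / α := by
    rw [mul_div_assoc]
    gcongr
    rw [le_div_iff₀ hα]; linarith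
  calc x ^ k * exp (-γ) ^ k.choose 2 = exp (k * log x - γ * (k * (k - 1) / 2)) := by
        conv_lhs => rw [← exp_log hx, ← exp_nat_mul, ← exp_nat_mul, ← exp_add]
        rw [Nat.cast_choose_two]
        ring_nf
    _ ≤ _ := by gcongr

lemma tendsto_floor_mul_log_atTop {α : ℝ} (hα : 0 < α) :
    Tendsto (fun n : ℕ => ⌊α * log n⌋₊) atTop atTop :=
  tendsto_nat_floor_atTop.comp <|
    (tendsto_log_atTop.comp tendsto_natCast_atTop_atTop).const_mul_atTop hα

theorem tendsto_pow_mul_exp_neg_mul_choose_two {α γ : ℝ} (hα : 0 < α) (hγα : 2 < γ * α) :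
    Tendsto (fun n : ℕ => (n : ℝ) ^ ⌊α * log n⌋₊ * exp (-γ) ^ (⌊α * log n⌋₊).choose 2)
      atTop (𝓝 0) := by
  refine tendsto_of_tendsto_of_tendsto_of_le_of_le' tendsto_const_nhds
    (tendsto_exp_atBot.comp <| (tendsto_quadratic_sub_atBot hα hγα).comp <|
      tendsto_natCast_atTop_atTop.comp (tendsto_floor_mul_log_atTop hα))
    (Eventually.of_forall fun n => by positivity) ?_
  filter_upwards [eventually_gt_atTop 0] with n hn
  exact pow_mul_exp_neg_mul_choose_two_le hα (Nat.cast_pos.mpr hn) (Nat.lt_floor_add_one _)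

lemma exists_decay_rate {δ c ε : ℝ} (hδ0 : 0 < δ) (hδ1 : δ < 1) (hc0 : 0 < c) (hc1 : c < 1)
    (hε0 : 0 ≤ ε) (hε1 : ε < 1) (hgap : (1 + ε) / log (1 / c) < (1 - ε) / log (1 / δ)) :
    ∃ γ, 2 < γ * ((1 - ε) * 2 / log (1 / δ)) ∧ c < exp (-γ) := by
  have hL : 0 < log (1 / δ) := log_pos (one_lt_one_div hδ0 hδ1)
  have hLc : 0 < log (1 / c) := log_pos (one_lt_one_div hc0 hc1)
  obtain ⟨γ, hLγ, hγc⟩ : ∃ γ, log (1 / δ) / (1 - ε) < γ ∧ γ < log (1 / c) := by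
    refine exists_between ?_
    rw [div_lt_div_iff₀ hLc hL] at hgap
    rw [div_lt_iff₀ (by linarith)]
    nlinarith [mul_nonneg hε0 hL.le]
  refine ⟨γ, ?_, ?_⟩
  · rw [div_lt_iff₀ (by linarith)] at hLγ
    rw [mul_div_assoc', lt_div_iff₀ hL]
    linarith
  · rw [one_div, log_inv] at hγc
    rw [← exp_log hc0, exp_lt_exp]
    linarith

open Filter in
theorem stmt16_general
    (δ c : ℝ) (hc0 : 0 < c) (hcδ : c < δ) (hδ1 : δ < 1)
    (ε : ℝ) (hε0 : 0 < ε) (hε1 : ε < 1)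
    (hgap : (1 - ε) / Real.log (1/δ) > (1 + ε) / Real.log (1/c))
    {Ω : ℕ → Type*} [∀ n, MeasurableSpace (Ω n)]
    (P : ∀ n, Measure (Ω n))
    (lam : ∀ n, EdgeKn n → Ω n → ℝ) (hmeas : ∀ n e, Measurable (lam n e))
    (hindep : ∀ n, iIndepFun (lam n) (P n))
    (hunif : ∀ n e, Measure.map (lam n e) (P n) = (volume : Measure ℝ).restrict (Set.Icc 0 1)) :
    Tendsto
      (fun n =>
        P n {ω | ∃ Q : Finset (Fin n),
          ⌊(1 - ε) * (2 * Real.log n / Real.log (1/δ))⌋₊ ≤ Q.card ∧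
          ∀ e e' : EdgeKn n, (∀ v ∈ e.1, v ∈ Q) → (∀ v ∈ e'.1, v ∈ Q) →
            |lam n e ω - lam n e' ω| ≤ c})
      atTop (nhds 0) := by
  set α := (1 - ε) * 2 / log (1 / δ)
  have hα : 0 < α := div_pos (by linarith) (log_pos (one_lt_one_div (hc0.trans hcδ) hδ1))
  obtain ⟨γ, hγα, hcγ⟩ :=
    exists_decay_rate (hc0.trans hcδ) hδ1 hc0 (hcδ.trans hδ1) hε0.le hε1 hgap
  set T := ⌊1 / (exp (-γ) - c)⌋₊
  have hk (n : ℕ) : ⌊(1 - ε) * (2 * log n / log (1 / δ))⌋₊ = ⌊α * log n⌋₊ := by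
    congr 1; ring
  have hlim := ENNReal.tendsto_ofReal
    ((tendsto_pow_mul_exp_neg_mul_choose_two hα hγα).const_mul ((T : ℝ) + 1))
  rw [mul_zero, ENNReal.ofReal_zero] at hlim
  refine tendsto_of_tendsto_of_tendsto_of_le_of_le' tendsto_const_nhds hlim
    (Eventually.of_forall fun _ => zero_le) ?_
  filter_upwards [(tendsto_floor_mul_log_atTop hα).eventually_ge_atTop 2] with n hn
  simp only [hk]
  refine (measure_exists_temporalClique_le (hmeas n) (hindep n) (hunif n) (sub_pos.mpr hcγ)
    hn).trans ?_
  rw [add_sub_cancel, ← ENNReal.ofReal_pow (exp_pos _).le, ← ENNReal.ofReal_natCast,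
    ← ENNReal.ofReal_natCast T, ← ENNReal.ofReal_one,
    ← ENNReal.ofReal_add (by positivity) zero_le_one,
    ← ENNReal.ofReal_mul (by positivity), ← ENNReal.ofReal_mul (by positivity)]
  refine ENNReal.ofReal_le_ofReal ?_
  rw [mul_comm (n.choose _ : ℝ), mul_assoc]
  gcongr
  exact_mod_cast Nat.choose_le_pow n _

open Filter in
/-- For constants `0 < c < δ < 1` and `ε ∈ (0,1)` with
`(1-ε)/ln(1/δ) > (1+ε)/ln(1/c)`, and `k₀(n) = 2 ln n / ln(1/δ)`, the probability that
some vertex subset `Q` of size at least `⌊(1-ε) k₀(n)⌋` has all the labels of its edges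
within an interval of length at most `c` (equivalently, `Q` is a `c`-temporal clique)
tends to `0` as `n → ∞`. -/
theorem stmt16
    (δ c : ℝ) (hc0 : 0 < c) (hcδ : c < δ) (hδ1 : δ < 1)
    (ε : ℝ) (hε0 : 0 < ε) (hε1 : ε < 1)
    (hgap : (1 - ε) / Real.log (1/δ) > (1 + ε) / Real.log (1/c))
    {Ω : ℕ → Type*} [∀ n, MeasurableSpace (Ω n)]
    (P : ∀ n, Measure (Ω n)) (hP : ∀ n, IsProbabilityMeasure (P n))
    (lam : ∀ n, EdgeKn n → Ω n → ℝ) (hmeas : ∀ n e, Measurable (lam n e))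
    (hindep : ∀ n, iIndepFun (lam n) (P n))
    (hunif : ∀ n e, Measure.map (lam n e) (P n) = (volume : Measure ℝ).restrict (Set.Icc 0 1)) :
    Tendsto
      (fun n =>
        P n {ω | ∃ Q : Finset (Fin n),
          ⌊(1 - ε) * (2 * Real.log n / Real.log (1/δ))⌋₊ ≤ Q.card ∧
          ∀ e e' : EdgeKn n, (∀ v ∈ e.1, v ∈ Q) → (∀ v ∈ e'.1, v ∈ Q) →
            |lam n e ω - lam n e' ω| ≤ c})
      atTop (nhds 0) :=
  stmt16_general δ c hc0 hcδ hδ1 ε hε0 hε1 hgap P lam hmeas hindep hunif
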